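/- Under the assumptions that |S_i| = C(n+r,r), S_i is r-generic, and μ^i is supported on all of S_i with positive weights for i = 1,2, the optimal value of the moment relaxation equals the optimal value of the original separation problem: τ_r^s(y¹,y²) = τ^s. -/

import Mathlib

noncomputable section
open Classical Finset Matrix

/-- Multi-indices in `n` variables of total degree at most `r`. -/
abbrev MIdx (n r : ℕ) := {α : Fin n → ℕ // ∑ i, α i ≤ r}

instance MIdx.fintype (n r : ℕ) : Fintype (MIdx n r) := by
  have h : ∀ a : MIdx n r, ∀ i, a.1 i ≤ r := fun a i =>
    le_trans (Finset.single_le_sum (fun j _ => Nat.zero_le (a.1 j)) (Finset.mem_univ i)) a.2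
  have hinj : Function.Injective
      (fun a : MIdx n r => (fun i => (⟨a.1 i, Nat.lt_succ_of_le (h a i)⟩ : Fin (r+1)))) := by
    intro a b hab
    apply Subtype.ext; funext i
    have := congrFun hab i
    simpa [Fin.mk.injEq] using this
  have : Finite (MIdx n r) := Finite.of_injective _ hinj
  exact Fintype.ofFinite _

/-- The monomial `x^α = x₁^{α₁} ⋯ x_n^{α_n}`. -/
def mono {n : ℕ} (x : Fin n → ℝ) (α : Fin n → ℕ) : ℝ := ∏ i, x i ^ α i

/-- Moments `y_α = ∑_{x ∈ S} μ_x x^α` of the measure `μ = ∑_{x∈S} μ_x δ_x`. -/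
def moments {n : ℕ} (S : Finset (Fin n → ℝ)) (μ : (Fin n → ℝ) → ℝ) (α : Fin n → ℕ) : ℝ :=
  ∑ x ∈ S, μ x * mono x α

/-- The localizing matrix `M_r(θ y)(α,β) = ∑_γ θ_γ y_{α+β+γ}`. -/
def locMat (n r : ℕ) (θ : MvPolynomial (Fin n) ℝ) (y : (Fin n → ℕ) → ℝ) :
    Matrix (MIdx n r) (MIdx n r) ℝ :=
  fun α β => ∑ γ ∈ θ.support, θ.coeff γ * y (fun i => α.1 i + β.1 i + γ i)

/-- Optimal value (infimum, in the extended reals) of the original separation problem `P^s`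
for datasets `S₁`, `S₂`, feasible set `Θ` and objective `f`. -/
def sepVal {n : ℕ} (Θ : Set (MvPolynomial (Fin n) ℝ)) (f : MvPolynomial (Fin n) ℝ → ℝ)
    (S1 S2 : Finset (Fin n → ℝ)) : EReal :=
  sInf ((fun θ => ((f θ : ℝ) : EReal)) ''
    {θ | θ ∈ Θ ∧ (∀ x ∈ S1, 0 ≤ MvPolynomial.eval x θ) ∧
      (∀ x ∈ S2, MvPolynomial.eval x θ ≤ 0)})

/-- Optimal value (infimum, in the extended reals) of the moment relaxation `P^s_r(y¹,y²)`. -/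
def relaxVal {n : ℕ} (Θ : Set (MvPolynomial (Fin n) ℝ)) (f : MvPolynomial (Fin n) ℝ → ℝ)
    (r : ℕ) (y1 y2 : (Fin n → ℕ) → ℝ) : EReal :=
  sInf ((fun θ => ((f θ : ℝ) : EReal)) ''
    {θ | θ ∈ Θ ∧ (locMat n r θ y1).PosSemidef ∧ (locMat n r (-θ) y2).PosSemidef})
/-- The moment matrix `M_r(y)(α,β) = y_{α+β}`. -/
def momMat (n r : ℕ) (y : (Fin n → ℕ) → ℝ) : Matrix (MIdx n r) (MIdx n r) ℝ :=
  fun α β => y (fun i => α.1 i + β.1 i)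

/-- `S` is `r`-generic: no nonzero polynomial of degree at most `r` vanishes on all of `S`. -/
def rGeneric {n : ℕ} (S : Finset (Fin n → ℝ)) (r : ℕ) : Prop :=
  ∀ g : MvPolynomial (Fin n) ℝ, g.totalDegree ≤ r →
    (∀ x ∈ S, MvPolynomial.eval x g = 0) → g = 0

/-!
The quadratic form of the localizing matrix `M_r(θ y)` for `y` the moments of `μ` is
`p ↦ ∑_{x ∈ S} μ_x θ(x) p(x)²` on polynomials `p` of degree at most `r`, so it is positive
semidefinite as soon as `θ ≥ 0` on `S`. Conversely, `|S| = C(n+r, r)` is the dimension of the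
space of such polynomials, so by `r`-genericity evaluation on `S` is a bijection onto `ℝ^S`;
testing the form against the Lagrange polynomial of a point `x₀ ∈ S` leaves `μ_{x₀} θ(x₀) ≥ 0`.
Hence the relaxation has exactly the feasible set of the separation problem.
-/

open MvPolynomial

namespace MIdx

variable {n r : ℕ}

/-- Stars and bars: a multi-index `α` of degree at most `r` becomes one of degree exactly `r`
by prepending the slack coordinate `r - |α|`. -/
def homogenize : MIdx n r ≃ {P : Fin (n + 1) → ℕ // ∑ i, P i = r} where
  toFun α := ⟨Fin.cons (r - ∑ i, α.1 i) α.1, by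
    simp only [Fin.sum_univ_succ, Fin.cons_zero, Fin.cons_succ]
    have := α.2
    omega⟩
  invFun P := ⟨Fin.tail P.1, by
    have hP : P.1 0 + ∑ i : Fin n, P.1 i.succ = r := (Fin.sum_univ_succ _).symm.trans P.2
    exact (Nat.le_add_left _ _).trans_eq hP⟩
  left_inv α := rfl
  right_inv P := by
    have hP : P.1 0 + ∑ i : Fin n, P.1 i.succ = r := (Fin.sum_univ_succ _).symm.trans P.2
    ext1
    change Fin.cons (r - ∑ i : Fin n, P.1 i.succ) (Fin.tail P.1) = P.1
    rw [show r - ∑ i : Fin n, P.1 i.succ = P.1 0 by omega, Fin.cons_self_tail]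

theorem card : Fintype.card (MIdx n r) = (n + r).choose r := by
  rw [Fintype.card_congr (homogenize.trans (Sym.equivNatSumOfFintype (Fin (n + 1)) r).symm),
    Sym.card_sym_eq_choose, Fintype.card_fin]
  congr 1
  omega

def poly : (MIdx n r → ℝ) →ₗ[ℝ] MvPolynomial (Fin n) ℝ :=
  Fintype.linearCombination ℝ fun α => monomial (Finsupp.equivFunOnFinite.symm α.1) 1

theorem eval_poly (w : MIdx n r → ℝ) (x : Fin n → ℝ) :
    eval x (poly w) = ∑ α, w α * mono x α.1 := by
  simp [poly, Fintype.linearCombination_apply, eval_monomial, Finsupp.prod_fintype, mono]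

theorem totalDegree_poly_le (w : MIdx n r → ℝ) : (poly w).totalDegree ≤ r := by
  refine totalDegree_finsetSum_le fun α _ => (totalDegree_smul_le _ _).trans ?_
  refine (totalDegree_monomial_le _ _).trans ?_
  simpa [Finsupp.sum_fintype] using α.2

theorem poly_injective : Function.Injective (poly (n := n) (r := r)) :=
  linearIndependent_iff_injective_fintypeLinearCombination.mp <|
    (basisMonomials (Fin n) ℝ).linearIndependent.comp _ fun _ _ h =>
      Subtype.ext (Finsupp.equivFunOnFinite.symm.injective h)

end MIdx

section LocalizingMatrix

variable {n r : ℕ}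

theorem mono_add (x : Fin n → ℝ) (α β : Fin n → ℕ) : mono x (α + β) = mono x α * mono x β := by
  simp only [mono, Pi.add_apply, pow_add, prod_mul_distrib]

theorem locMat_isHermitian (θ : MvPolynomial (Fin n) ℝ) (y : (Fin n → ℕ) → ℝ) :
    (locMat n r θ y).IsHermitian := by
  ext α β
  simp only [conjTranspose_apply, star_trivial, locMat, Nat.add_comm (β.1 _)]

theorem locMat_moments_apply (S : Finset (Fin n → ℝ)) (μ : (Fin n → ℝ) → ℝ)
    (θ : MvPolynomial (Fin n) ℝ) (α β : MIdx n r) :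
    locMat n r θ (moments S μ) α β = ∑ x ∈ S, μ x * eval x θ * (mono x α.1 * mono x β.1) := by
  simp only [locMat, moments, eval_eq', mul_sum, sum_mul]
  rw [sum_comm]
  refine sum_congr rfl fun x _ => sum_congr rfl fun γ _ => ?_
  rw [show (fun i => α.1 i + β.1 i + γ i) = α.1 + β.1 + ⇑γ from rfl, mono_add, mono_add]
  simp only [mono]
  ring

theorem dotProduct_locMat_moments_mulVec (S : Finset (Fin n → ℝ)) (μ : (Fin n → ℝ) → ℝ)
    (θ : MvPolynomial (Fin n) ℝ) (v : MIdx n r → ℝ) :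
    v ⬝ᵥ locMat n r θ (moments S μ) *ᵥ v
      = ∑ x ∈ S, μ x * eval x θ * eval x (MIdx.poly v) ^ 2 := by
  simp only [dotProduct, mulVec, locMat_moments_apply, MIdx.eval_poly, sq, mul_sum, sum_mul]
  rw [sum_congr rfl fun α _ => sum_comm, sum_comm]
  refine sum_congr rfl fun x _ => ?_
  rw [sum_comm]
  refine sum_congr rfl fun α _ => sum_congr rfl fun β _ => ?_
  ring

theorem posSemidef_locMat_moments {S : Finset (Fin n → ℝ)} {μ : (Fin n → ℝ) → ℝ}
    {θ : MvPolynomial (Fin n) ℝ} (hμ : ∀ x ∈ S, 0 ≤ μ x) (hθ : ∀ x ∈ S, 0 ≤ eval x θ) :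
    (locMat n r θ (moments S μ)).PosSemidef := by
  refine .of_dotProduct_mulVec_nonneg (locMat_isHermitian θ _) fun v => ?_
  rw [star_trivial, dotProduct_locMat_moments_mulVec]
  exact sum_nonneg fun x hx => mul_nonneg (mul_nonneg (hμ x hx) (hθ x hx)) (sq_nonneg _)

theorem exists_poly_eval_eq {S : Finset (Fin n → ℝ)} (hcard : S.card = (n + r).choose r)
    (hgen : rGeneric S r) (g : (Fin n → ℝ) → ℝ) :
    ∃ w : MIdx n r → ℝ, ∀ x ∈ S, eval x (MIdx.poly w) = g x := by
  let L : (MIdx n r → ℝ) →ₗ[ℝ] (S → ℝ) :=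
    LinearMap.pi (fun x : S => (aeval x.1).toLinearMap) ∘ₗ MIdx.poly
  have hL (w : MIdx n r → ℝ) (x : S) : L w x = eval x.1 (MIdx.poly w) := by
    simp [L]
  have hinj : Function.Injective L := by
    refine (injective_iff_map_eq_zero L).2 fun w hw => MIdx.poly_injective ?_
    rw [map_zero]
    refine hgen _ (MIdx.totalDegree_poly_le w) fun x hx => ?_
    rw [← hL w ⟨x, hx⟩, hw, Pi.zero_apply]
  have hrank : Module.finrank ℝ (MIdx n r → ℝ) = Module.finrank ℝ (S → ℝ) := by
    simp [MIdx.card, hcard]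
  obtain ⟨w, hw⟩ :=
    (LinearMap.injective_iff_surjective_of_finrank_eq_finrank hrank).1 hinj fun x => g x
  exact ⟨w, fun x hx => (hL w ⟨x, hx⟩).symm.trans (congr_fun hw ⟨x, hx⟩)⟩

theorem nonneg_of_posSemidef_locMat_moments {S : Finset (Fin n → ℝ)} {μ : (Fin n → ℝ) → ℝ}
    {θ : MvPolynomial (Fin n) ℝ} (hcard : S.card = (n + r).choose r) (hgen : rGeneric S r)
    (hμ : ∀ x ∈ S, 0 < μ x) (h : (locMat n r θ (moments S μ)).PosSemidef) :
    ∀ x ∈ S, 0 ≤ eval x θ := by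
  intro x₀ hx₀
  obtain ⟨w, hw⟩ := exists_poly_eval_eq hcard hgen fun x => if x = x₀ then 1 else 0
  have hq := h.dotProduct_mulVec_nonneg w
  rw [star_trivial, dotProduct_locMat_moments_mulVec, sum_eq_single_of_mem x₀ hx₀
    fun x hx hne => by rw [hw x hx, if_neg hne]; ring, hw x₀ hx₀, if_pos rfl] at hq
  exact nonneg_of_mul_nonneg_right (by simpa using hq) (hμ x₀ hx₀)

theorem posSemidef_locMat_moments_iff {S : Finset (Fin n → ℝ)} {μ : (Fin n → ℝ) → ℝ}
    (hcard : S.card = (n + r).choose r) (hgen : rGeneric S r) (hμ : ∀ x ∈ S, 0 < μ x)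
    (θ : MvPolynomial (Fin n) ℝ) :
    (locMat n r θ (moments S μ)).PosSemidef ↔ ∀ x ∈ S, 0 ≤ eval x θ :=
  ⟨nonneg_of_posSemidef_locMat_moments hcard hgen hμ,
    posSemidef_locMat_moments fun x hx => (hμ x hx).le⟩

end LocalizingMatrix

theorem relaxVal_eq_sepVal_general {n r : ℕ} (S1 S2 : Finset (Fin n → ℝ))
    (Θ : Set (MvPolynomial (Fin n) ℝ)) (f : MvPolynomial (Fin n) ℝ → ℝ)
    (hcard1 : S1.card = (n + r).choose r) (hcard2 : S2.card = (n + r).choose r)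
    (hgen1 : rGeneric S1 r) (hgen2 : rGeneric S2 r)
    (μ1 μ2 : (Fin n → ℝ) → ℝ)
    (hμ1 : ∀ x ∈ S1, 0 < μ1 x)
    (hμ2 : ∀ x ∈ S2, 0 < μ2 x) :
    relaxVal Θ f r (moments S1 μ1) (moments S2 μ2) = sepVal Θ f S1 S2 := by
  unfold relaxVal sepVal
  congr 2
  ext θ
  simp only [Set.mem_ofPred_eq, posSemidef_locMat_moments_iff hcard1 hgen1 hμ1,
    posSemidef_locMat_moments_iff hcard2 hgen2 hμ2, map_neg, neg_nonneg]

/-- if `|S_i| = C(n+r,r)`, `S_i` is `r`-generic and `μ^i` has positive weights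
on all of `S_i` for `i = 1,2`, then the relaxation value equals the optimal value of the
original separation problem: `τ^s_r(y¹,y²) = τ^s`. -/
theorem relaxVal_eq_sepVal {n r : ℕ} (S1 S2 : Finset (Fin n → ℝ))
    (Θ : Set (MvPolynomial (Fin n) ℝ)) (f : MvPolynomial (Fin n) ℝ → ℝ)
    (hcard1 : S1.card = (n + r).choose r) (hcard2 : S2.card = (n + r).choose r)
    (hgen1 : rGeneric S1 r) (hgen2 : rGeneric S2 r)
    (μ1 μ2 : (Fin n → ℝ) → ℝ)
    (hμ1 : ∀ x ∈ S1, 0 < μ1 x) (hμ1sum : ∑ x ∈ S1, μ1 x = 1)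
    (hμ2 : ∀ x ∈ S2, 0 < μ2 x) (hμ2sum : ∑ x ∈ S2, μ2 x = 1) :
    relaxVal Θ f r (moments S1 μ1) (moments S2 μ2) = sepVal Θ f S1 S2 :=
  relaxVal_eq_sepVal_general S1 S2 Θ f hcard1 hcard2 hgen1 hgen2 μ1 μ2 hμ1 hμ2
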